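/- arXiv:2003.11238 — 2 statements merged into one kernel-verified Lean document; each statement's English description precedes it below -/
import Mathlib

section
/- Let T be a linear subspace of R^n, h : R^n → R convex, g_1, g_2 ∈ R^n, t > 0, x ∈ R^n. Define v = argmin_{v ∈ T} ⟨g_1, v⟩ + ‖v‖²/(2t) + h(x + v) and w = argmin_{w ∈ T} ⟨g_2, w⟩ + ‖w‖²/(2t) + h(x + w). Then ‖v − w‖ ≤ t ‖g_1 − g_2‖ (non-expansiveness of the manifold proximal mapping). -/
/-!
Comparing the minimizer `v` of `⟪g, z⟫ + ‖z‖²/(2t) + φ z` over a convex set with the points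
`v + s • (z - v)` and letting `s → 0⁺` gives the first-order condition
`φ v ≤ ⟪g + t⁻¹ • v, z - v⟫ + φ z`, with no differentiability of `φ` needed. Writing it for
`(v, g₁)` tested at `w` and for `(w, g₂)` tested at `v` and adding, the `φ`-terms cancel and
`‖v - w‖² / t ≤ ⟪g₁ - g₂, w - v⟫`; Cauchy–Schwarz finishes.
-/

open Set Filter Topology

section ProximalMap

variable {E : Type*} [NormedAddCommGroup E] [InnerProductSpace ℝ E]

noncomputable def proxObjective (φ : E → ℝ) (t : ℝ) (g z : E) : ℝ :=
  inner ℝ g z + ‖z‖ ^ 2 / (2 * t) + φ z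

lemma nonneg_of_forall_mem_Ioc_nonneg_add_mul {a b : ℝ}
    (h : ∀ s ∈ Ioc (0 : ℝ) 1, 0 ≤ a + s * b) : 0 ≤ a := by
  have hlim : Tendsto (fun s : ℝ => a + s * b) (𝓝[>] 0) (𝓝 a) := by
    have : Continuous fun s : ℝ => a + s * b := by fun_prop
    simpa using (this.tendsto 0).mono_left nhdsWithin_le_nhds
  exact ge_of_tendsto hlim (eventually_of_mem (Ioc_mem_nhdsGT one_pos) h)

lemma proxObjective_segment_nonneg {K : Set E} {φ : E → ℝ} (hφ : ConvexOn ℝ K φ) {t : ℝ}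
    {g v z : E} (hv : IsMinOn (proxObjective φ t g) K v) (hvK : v ∈ K) (hzK : z ∈ K)
    {s : ℝ} (hs : s ∈ Ioc (0 : ℝ) 1) :
    0 ≤ s * (inner ℝ g (z - v) + t⁻¹ * inner ℝ v (z - v) + φ z - φ v
      + s * (‖z - v‖ ^ 2 / (2 * t))) := by
  obtain ⟨hs0, hs1⟩ := hs
  have hmin := isMinOn_iff.1 hv _ (hφ.1.add_smul_sub_mem hvK hzK ⟨hs0.le, hs1⟩)
  have hconv : φ (v + s • (z - v)) ≤ (1 - s) * φ v + s * φ z := by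
    have := hφ.2 hvK hzK (sub_nonneg.2 hs1) hs0.le (by ring)
    rwa [show (1 - s) • v + s • z = v + s • (z - v) by module, smul_eq_mul, smul_eq_mul] at this
  simp only [proxObjective, inner_add_right, real_inner_smul_right, norm_add_sq_real,
    norm_smul, mul_pow, Real.norm_eq_abs, sq_abs] at hmin
  linear_combination hmin + hconv

theorem ConvexOn.le_inner_add_of_isMinOn_proxObjective {K : Set E} {φ : E → ℝ}
    (hφ : ConvexOn ℝ K φ) {t : ℝ} {g v z : E} (hv : IsMinOn (proxObjective φ t g) K v)
    (hvK : v ∈ K) (hzK : z ∈ K) :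
    φ v ≤ inner ℝ g (z - v) + t⁻¹ * inner ℝ v (z - v) + φ z := by
  have := nonneg_of_forall_mem_Ioc_nonneg_add_mul fun s hs =>
    (mul_nonneg_iff_of_pos_left hs.1).1 (proxObjective_segment_nonneg hφ hv hvK hzK hs)
  linarith

end ProximalMap

/-- Non-expansiveness of the manifold proximal mapping: if `T` is a linear subspace of
`ℝⁿ`, `h` is convex, `t > 0`, and `v`, `w` are the minimizers over `T` of
`⟨g₁, v⟩ + ‖v‖²/(2t) + h(x + v)` and `⟨g₂, w⟩ + ‖w‖²/(2t) + h(x + w)` respectively,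
then `‖v − w‖ ≤ t‖g₁ − g₂‖`. -/
theorem statement11 (n : ℕ) (T : Submodule ℝ (EuclideanSpace ℝ (Fin n)))
    (h : EuclideanSpace ℝ (Fin n) → ℝ) (hconv : ConvexOn ℝ Set.univ h)
    (t : ℝ) (ht : 0 < t) (x g₁ g₂ v w : EuclideanSpace ℝ (Fin n))
    (hvT : v ∈ T)
    (hv : ∀ z ∈ T, (inner ℝ g₁ v : ℝ) + ‖v‖ ^ 2 / (2 * t) + h (x + v)
      ≤ (inner ℝ g₁ z : ℝ) + ‖z‖ ^ 2 / (2 * t) + h (x + z))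
    (hwT : w ∈ T)
    (hw : ∀ z ∈ T, (inner ℝ g₂ w : ℝ) + ‖w‖ ^ 2 / (2 * t) + h (x + w)
      ≤ (inner ℝ g₂ z : ℝ) + ‖z‖ ^ 2 / (2 * t) + h (x + z)) :
    ‖v - w‖ ≤ t * ‖g₁ - g₂‖ := by
  have hφ : ConvexOn ℝ T fun z => h (x + z) :=
    (hconv.translate_right x).subset (subset_univ _) T.convex
  have hvw := hφ.le_inner_add_of_isMinOn_proxObjective (isMinOn_iff.2 hv) hvT hwT
  have hwv := hφ.le_inner_add_of_isMinOn_proxObjective (isMinOn_iff.2 hw) hwT hvT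
  have hmono : ‖v - w‖ ^ 2 ≤ t * inner ℝ (g₁ - g₂) (w - v) := by
    have hsum : t⁻¹ * ‖v - w‖ ^ 2 ≤ inner ℝ (g₁ - g₂) (w - v) := by
      rw [← real_inner_self_eq_norm_sq, inner_sub_left]
      simp only [inner_sub_left, inner_sub_right, real_inner_comm] at hvw hwv ⊢
      linarith
    rwa [inv_mul_le_iff₀ ht] at hsum
  have hcs : inner ℝ (g₁ - g₂) (w - v) ≤ ‖g₁ - g₂‖ * ‖v - w‖ := by
    simpa [norm_sub_rev] using real_inner_le_norm (g₁ - g₂) (w - v)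
  have hsq : ‖v - w‖ ^ 2 ≤ t * ‖g₁ - g₂‖ * ‖v - w‖ := by
    nlinarith [mul_le_mul_of_nonneg_left hcs ht.le]
  nlinarith [norm_nonneg (v - w), mul_nonneg ht.le (norm_nonneg (g₁ - g₂))]
end

section
/- Let α ≥ L_H > 0, η ∈ R^d, g ∈ R^d, and H a symmetric d×d matrix. Suppose the cubic-subproblem optimality conditions hold: (H + λ* I)η + g = 0, λ* = (α/2)‖η‖, and H + λ* I ⪰ 0. Then g^T η + (1/2) η^T H η + (L_H/6)‖η‖³ ≤ −(α/12)‖η‖³. -/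
/-! The optimality condition gives `⟪g, η⟫ = -⟪η, (H + λ I) η⟫`, so the quadratic model equals
`-½ ⟪η, (H + λ I) η⟫ - (λ/2) ‖η‖²`, which is at most `-(λ/2) ‖η‖² = -(α/4) ‖η‖³` by
positive semidefiniteness. The cubic term `(L_H/6) ‖η‖³ ≤ (α/6) ‖η‖³` then leaves `-(α/12) ‖η‖³`. -/

section QuadraticModel

variable {E : Type*} [NormedAddCommGroup E] [InnerProductSpace ℝ E]

theorem inner_eq_neg_inner_add_smul_of_add_add_eq_zero {H : E →L[ℝ] E} {η g : E} {lam : ℝ}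
    (hopt : H η + lam • η + g = 0) :
    inner ℝ g η = -inner ℝ η (H η + lam • η) := by
  rw [eq_neg_of_add_eq_zero_right hopt, inner_neg_left, real_inner_comm]

theorem inner_add_half_inner_le_neg_half_mul_norm_sq {H : E →L[ℝ] E} {η g : E} {lam : ℝ}
    (hopt : H η + lam • η + g = 0) (hpsd : 0 ≤ inner ℝ η (H η + lam • η)) :
    inner ℝ g η + 1 / 2 * inner ℝ η (H η) ≤ -(lam / 2 * ‖η‖ ^ 2) := by
  have hsplit : inner ℝ η (H η + lam • η) = inner ℝ η (H η) + lam * ‖η‖ ^ 2 := by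
    rw [inner_add_right, real_inner_smul_right, real_inner_self_eq_norm_sq]
  rw [inner_eq_neg_inner_add_smul_of_add_add_eq_zero hopt]
  linarith

end QuadraticModel

theorem statement16_general (d : ℕ) (α LH : ℝ) (hα : LH ≤ α)
    (η g : EuclideanSpace ℝ (Fin d))
    (H : EuclideanSpace ℝ (Fin d) →L[ℝ] EuclideanSpace ℝ (Fin d))
    (lam : ℝ) (hlam : lam = α / 2 * ‖η‖)
    (hopt : H η + lam • η + g = 0)
    (hpsd : ∀ v : EuclideanSpace ℝ (Fin d), 0 ≤ (inner ℝ v (H v + lam • v) : ℝ)) :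
    (inner ℝ g η : ℝ) + 1 / 2 * (inner ℝ η (H η) : ℝ) + LH / 6 * ‖η‖ ^ 3
      ≤ -(α / 12) * ‖η‖ ^ 3 := by
  have hmodel := inner_add_half_inner_le_neg_half_mul_norm_sq hopt (hpsd η)
  have hcubic : LH / 6 * ‖η‖ ^ 3 ≤ α / 6 * ‖η‖ ^ 3 := by gcongr
  calc (inner ℝ g η : ℝ) + 1 / 2 * inner ℝ η (H η) + LH / 6 * ‖η‖ ^ 3
      ≤ -(lam / 2 * ‖η‖ ^ 2) + α / 6 * ‖η‖ ^ 3 := add_le_add hmodel hcubic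
    _ = -(α / 12) * ‖η‖ ^ 3 := by rw [hlam]; ring

/-- Sufficient decrease for the cubic regularized Newton step: if `α ≥ L_H > 0` and the
cubic subproblem optimality conditions `(H + λ* I)η + g = 0`, `λ* = (α/2)‖η‖`,
`H + λ* I ⪰ 0` hold (with `H` symmetric), then
`gᵀη + (1/2)ηᵀHη + (L_H/6)‖η‖³ ≤ −(α/12)‖η‖³`. -/
theorem statement16 (d : ℕ) (α LH : ℝ) (hLH : 0 < LH) (hα : LH ≤ α)
    (η g : EuclideanSpace ℝ (Fin d))
    (H : EuclideanSpace ℝ (Fin d) →L[ℝ] EuclideanSpace ℝ (Fin d))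
    (hsym : ∀ a b : EuclideanSpace ℝ (Fin d), (inner ℝ (H a) b : ℝ) = inner ℝ a (H b))
    (lam : ℝ) (hlam : lam = α / 2 * ‖η‖)
    (hopt : H η + lam • η + g = 0)
    (hpsd : ∀ v : EuclideanSpace ℝ (Fin d), 0 ≤ (inner ℝ v (H v + lam • v) : ℝ)) :
    (inner ℝ g η : ℝ) + 1 / 2 * (inner ℝ η (H η) : ℝ) + LH / 6 * ‖η‖ ^ 3
      ≤ -(α / 12) * ‖η‖ ^ 3 :=
  statement16_general d α LH hα η g H lam hlam hopt hpsd
end
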